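/- For every κ ∈ ℝ, the function α(t) = (1 + κt²)^(−1) satisfies t·α'(t) = −2α(t) + 2α(t)² on any interval of (0,∞) on which 1 + κt² ≠ 0. Conversely, if α : (0, ε) → ℝ is a C¹ solution of t·α'(t) = −2α(t) + 2α(t)² with α(t) → 1 as t → 0⁺, then there exists κ ∈ ℝ such that α(t) = (1 + κt²)^(−1) for all t ∈ (0, ε); moreover such a solution extends to a solution on all of (0, ∞) if and only if κ ≥ 0. -/

import Mathlib

open Set Filter

private lemma asd_formula_deriv (κ t : ℝ) (ht : 0 < t) (hne : 1 + κ * t ^ 2 ≠ 0) :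
    HasDerivAt (fun s => (1 + κ * s ^ 2)⁻¹)
      (t⁻¹ * (-2 * (1 + κ * t ^ 2)⁻¹ + 2 * ((1 + κ * t ^ 2)⁻¹) ^ 2)) t := by
  have ht0 : t ≠ 0 := ht.ne'
  have h1 : HasDerivAt (fun s : ℝ => 1 + κ * s ^ 2) (κ * (2 * t)) t := by
    simpa using ((hasDerivAt_pow 2 t).const_mul κ).const_add 1
  have h2 := h1.inv hne
  refine h2.congr_deriv ?_
  field_simp
  ring

private lemma prod_of_F {t x κ : ℝ} (ht : t ≠ 0) (hx : x ≠ 0)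
    (h : (x⁻¹ - 1) * (t ^ 2)⁻¹ = κ) : (1 + κ * t ^ 2) * x = 1 := by
  have ht2 : (t ^ 2 : ℝ) ≠ 0 := pow_ne_zero _ ht
  have h1 : x⁻¹ - 1 = κ * t ^ 2 := by
    rw [← h, mul_assoc, inv_mul_cancel₀ ht2, mul_one]
  have h2 : x⁻¹ = 1 + κ * t ^ 2 := by linarith
  rw [← h2, inv_mul_cancel₀ hx]

private lemma F_of_prod {t x κ : ℝ} (ht : t ≠ 0)
    (h : (1 + κ * t ^ 2) * x = 1) : (x⁻¹ - 1) * (t ^ 2)⁻¹ = κ := by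
  have hx : x ≠ 0 := by
    intro h0; rw [h0, mul_zero] at h; exact zero_ne_one h
  have h2 : x⁻¹ = 1 + κ * t ^ 2 := by
    field_simp
    linarith [h]
  rw [h2]
  field_simp
  ring

private lemma F_const (b : ℝ) (γ : ℝ → ℝ)
    (hODE : ∀ t ∈ Ioo (0:ℝ) b, HasDerivAt γ (t⁻¹ * (-2 * γ t + 2 * γ t ^ 2)) t)
    (hnz : ∀ t ∈ Ioo (0:ℝ) b, γ t ≠ 0) :
    ∀ x ∈ Ioo (0:ℝ) b, ∀ y ∈ Ioo (0:ℝ) b,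
      ((γ x)⁻¹ - 1) * (x ^ 2)⁻¹ = ((γ y)⁻¹ - 1) * (y ^ 2)⁻¹ := by
  set F : ℝ → ℝ := fun s => ((γ s)⁻¹ - 1) * (s ^ 2)⁻¹ with hF
  have hderiv : ∀ t ∈ Ioo (0:ℝ) b, HasDerivAt F 0 t := by
    intro t ht
    have ht0 : t ≠ 0 := ht.1.ne'
    have hg0 : γ t ≠ 0 := hnz t ht
    have h1 := ((hODE t ht).inv hg0).sub_const 1
    have h2 : HasDerivAt (fun s : ℝ => (s ^ 2)⁻¹) (-(2 * t) / (t ^ 2) ^ 2) t := by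
      have := (hasDerivAt_pow 2 t).inv (pow_ne_zero 2 ht0)
      simp at this
      exact this
    have h3 := h1.mul h2
    refine h3.congr_deriv ?_
    simp only [Pi.inv_apply]
    field_simp
    ring
  have key : ∀ x y : ℝ, x ∈ Ioo (0:ℝ) b → y ∈ Ioo (0:ℝ) b → x < y → F x = F y := by
    intro x y hx hy hxy
    have hsub : Icc x y ⊆ Ioo (0:ℝ) b := fun t ht =>
      ⟨lt_of_lt_of_le hx.1 ht.1, lt_of_le_of_lt ht.2 hy.2⟩
    have hcont : ContinuousOn F (Icc x y) := fun t ht =>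
      ((hderiv t (hsub ht)).continuousAt).continuousWithinAt
    obtain ⟨c, _, hc⟩ := exists_hasDerivAt_eq_slope F (fun _ => 0) hxy hcont
      (fun t ht => hderiv t (hsub (Ioo_subset_Icc_self ht)))
    have h0 : (F y - F x) / (y - x) = 0 := hc.symm
    have := (div_eq_zero_iff.mp h0).resolve_right (sub_ne_zero.mpr hxy.ne')
    linarith
  intro x hx y hy
  rcases lt_trichotomy x y with h | h | h
  · exact key x y hx hy h
  · rw [h]
  · exact (key y x hy hx h).symm

private lemma extend_formula (γ : ℝ → ℝ) (κ b c : ℝ) (hc : 0 < c) (hcb : c ≤ b)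
    (hODE : ∀ t ∈ Ioo (0:ℝ) b, HasDerivAt γ (t⁻¹ * (-2 * γ t + 2 * γ t ^ 2)) t)
    (hfor : ∀ t ∈ Ioo (0:ℝ) c, (1 + κ * t ^ 2) * γ t = 1) :
    ∀ t ∈ Ioo (0:ℝ) b, (1 + κ * t ^ 2) * γ t = 1 := by
  set A : Set ℝ := {s | s ∈ Icc c b ∧ ∀ t ∈ Ioo (0:ℝ) s, (1 + κ * t ^ 2) * γ t = 1} with hA
  have hcA : c ∈ A := ⟨⟨le_refl c, hcb⟩, hfor⟩
  have hAne : A.Nonempty := ⟨c, hcA⟩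
  have hbdd : BddAbove A := ⟨b, fun s hs => hs.1.2⟩
  set m : ℝ := sSup A with hm
  have hcm : c ≤ m := le_csSup hbdd hcA
  have hmb : m ≤ b := csSup_le hAne (fun s hs => hs.1.2)
  have hm0 : 0 < m := lt_of_lt_of_le hc hcm
  have hIoo : ∀ t ∈ Ioo (0:ℝ) m, (1 + κ * t ^ 2) * γ t = 1 := by
    intro t ht
    obtain ⟨s, hsA, hts⟩ := exists_lt_of_lt_csSup hAne ht.2
    exact hsA.2 t ⟨ht.1, hts⟩
  suffices hbm : b ≤ m by
    intro t ht; exact hIoo t ⟨ht.1, lt_of_lt_of_le ht.2 hbm⟩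
  by_contra hbm
  push_neg at hbm  -- m < b
  have hmIoo : m ∈ Ioo (0:ℝ) b := ⟨hm0, hbm⟩
  have hγcont : ContinuousAt γ m := (hODE m hmIoo).continuousAt
  set g : ℝ → ℝ := fun t => (1 + κ * t ^ 2) * γ t with hg
  have hgcont : ContinuousAt g m := ContinuousAt.mul (by fun_prop) hγcont
  have T1 : Tendsto g (nhdsWithin m (Iio m)) (nhds (g m)) := hgcont.continuousWithinAt
  have T2 : Tendsto g (nhdsWithin m (Iio m)) (nhds 1) := by
    apply Tendsto.congr' _ tendsto_const_nhds
    filter_upwards [Ioo_mem_nhdsLT_of_mem (⟨hm0, le_refl m⟩ : m ∈ Ioc (0:ℝ) m)] with t ht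
    exact (hIoo t ht).symm
  have hgm : g m = 1 := tendsto_nhds_unique T1 T2
  have hγm : γ m ≠ 0 := by
    intro h0
    rw [hg] at hgm; simp only [h0, mul_zero] at hgm; exact zero_ne_one hgm
  obtain ⟨η, hη, hηne⟩ := Metric.eventually_nhds_iff.mp (hγcont.eventually_ne hγm)
  set s : ℝ := min (m + η / 2) ((m + b) / 2) with hs
  have hms : m < s := lt_min (by linarith) (by linarith)
  have hsb : s ≤ b := le_trans (min_le_right _ _) (by linarith)
  have hnzs : ∀ t ∈ Ioo (0:ℝ) s, γ t ≠ 0 := by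
    intro t ht
    rcases lt_trichotomy t m with h | h | h
    · intro h0
      have := hIoo t ⟨ht.1, h⟩
      rw [h0, mul_zero] at this; exact zero_ne_one this
    · rw [h]; exact hγm
    · apply hηne
      rw [Real.dist_eq, abs_of_pos (by linarith)]
      have : t < m + η / 2 := lt_of_lt_of_le ht.2 (min_le_left _ _)
      linarith
  have hODEs : ∀ t ∈ Ioo (0:ℝ) s, HasDerivAt γ (t⁻¹ * (-2 * γ t + 2 * γ t ^ 2)) t :=
    fun t ht => hODE t ⟨ht.1, lt_of_lt_of_le ht.2 hsb⟩
  have ht₀s : c / 2 ∈ Ioo (0:ℝ) s := ⟨by linarith, by linarith⟩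
  have ht₀c : c / 2 ∈ Ioo (0:ℝ) c := ⟨by linarith, by linarith⟩
  have hFc := F_const s γ hODEs hnzs
  have hsA : s ∈ A := by
    refine ⟨⟨le_trans hcm hms.le, hsb⟩, ?_⟩
    intro t ht
    have hFt₀ : ((γ (c/2))⁻¹ - 1) * ((c/2) ^ 2)⁻¹ = κ :=
      F_of_prod (by positivity) (hfor _ ht₀c)
    have hFt : ((γ t)⁻¹ - 1) * (t ^ 2)⁻¹ = κ := (hFc t ht _ ht₀s).trans hFt₀
    exact prod_of_F ht.1.ne' (hnzs t ht) hFt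
  have : s ≤ m := le_csSup hbdd hsA
  linarith

/-- The SU(2)-invariant anti-self-duality equation `t·α' = −2α + 2α²` on `ℝ⁴`.
(1) For every `κ ∈ ℝ`, the function `α(t) = (1 + κt²)⁻¹` satisfies
`t·α'(t) = −2α(t) + 2α(t)²` at every `t > 0` with `1 + κt² ≠ 0`.
(2) Conversely, any C¹ solution `α` on `(0, ε)` with `α(t) → 1` as `t → 0⁺` is of the
form `α(t) = (1 + κt²)⁻¹` for some `κ ∈ ℝ`, and such a solution extends to a solution on
all of `(0, ∞)` if and only if `κ ≥ 0`. -/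
theorem invariant_asd_solutions :
    (∀ (κ t : ℝ), 0 < t → 1 + κ * t ^ 2 ≠ 0 →
      HasDerivAt (fun s => (1 + κ * s ^ 2)⁻¹)
        (t⁻¹ * (-2 * (1 + κ * t ^ 2)⁻¹ + 2 * ((1 + κ * t ^ 2)⁻¹) ^ 2)) t) ∧
    (∀ (ε : ℝ) (α : ℝ → ℝ), 0 < ε →
      (∀ t ∈ Ioo (0 : ℝ) ε, HasDerivAt α (t⁻¹ * (-2 * α t + 2 * α t ^ 2)) t) →
      Tendsto α (nhdsWithin 0 (Ioi 0)) (nhds 1) →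
      ∃ κ : ℝ,
        (∀ t ∈ Ioo (0 : ℝ) ε, α t = (1 + κ * t ^ 2)⁻¹) ∧
        ((∃ β : ℝ → ℝ, (∀ t ∈ Ioo (0 : ℝ) ε, β t = α t) ∧
            ∀ t ∈ Ioi (0 : ℝ), HasDerivAt β (t⁻¹ * (-2 * β t + 2 * β t ^ 2)) t) ↔
          0 ≤ κ)) := by
  refine ⟨fun κ t ht hne => asd_formula_deriv κ t ht hne, ?_⟩
  intro ε α hε hODE hlim
  -- Step 1: find δ with α ∈ (1/2, 3/2) on (0, δ)
  have h1 : Ioo (1/2 : ℝ) (3/2) ∈ nhds (1:ℝ) := Ioo_mem_nhds (by norm_num) (by norm_num)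
  have h2 : α ⁻¹' Ioo (1/2 : ℝ) (3/2) ∈ nhdsWithin 0 (Ioi 0) := hlim h1
  obtain ⟨u, hu, hsub⟩ := mem_nhdsGT_iff_exists_Ioo_subset.mp h2
  set δ : ℝ := min u ε with hδdef
  have hδ : 0 < δ := lt_min hu hε
  have hδε : δ ≤ ε := min_le_right _ _
  have hODEδ : ∀ t ∈ Ioo (0:ℝ) δ, HasDerivAt α (t⁻¹ * (-2 * α t + 2 * α t ^ 2)) t :=
    fun t ht => hODE t ⟨ht.1, lt_of_lt_of_le ht.2 hδε⟩
  have hnzδ : ∀ t ∈ Ioo (0:ℝ) δ, α t ≠ 0 := by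
    intro t ht
    have : α t ∈ Ioo (1/2 : ℝ) (3/2) := hsub ⟨ht.1, lt_of_lt_of_le ht.2 (min_le_left _ _)⟩
    have := this.1
    linarith
  -- Step 2: define κ
  set κ : ℝ := ((α (δ/2))⁻¹ - 1) * ((δ/2) ^ 2)⁻¹ with hκdef
  have hδ2 : δ/2 ∈ Ioo (0:ℝ) δ := ⟨by linarith, by linarith⟩
  have prodδ : ∀ t ∈ Ioo (0:ℝ) δ, (1 + κ * t ^ 2) * α t = 1 := by
    intro t ht
    exact prod_of_F ht.1.ne' (hnzδ t ht) (F_const δ α hODEδ hnzδ t ht _ hδ2)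
  have key : ∀ t ∈ Ioo (0:ℝ) ε, (1 + κ * t ^ 2) * α t = 1 :=
    extend_formula α κ ε δ hδ hδε hODE prodδ
  have formula : ∀ t ∈ Ioo (0:ℝ) ε, α t = (1 + κ * t ^ 2)⁻¹ :=
    fun t ht => eq_inv_of_mul_eq_one_right (key t ht)
  refine ⟨κ, formula, ?_, ?_⟩
  · -- extension exists → 0 ≤ κ
    rintro ⟨β, hagree, hβODE⟩
    by_contra hκ
    push_neg at hκ  -- κ < 0
    have hκne : κ ≠ 0 := hκ.ne
    set T : ℝ := Real.sqrt (-κ)⁻¹ with hT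
    have hnκ : 0 < (-κ)⁻¹ := inv_pos.mpr (by linarith)
    have hT0 : 0 < T := Real.sqrt_pos.mpr hnκ
    have hTsq : T ^ 2 = (-κ)⁻¹ := Real.sq_sqrt hnκ.le
    have hzero : 1 + κ * T ^ 2 = 0 := by
      rw [hTsq, inv_neg, mul_neg, mul_inv_cancel₀ hκne]
      ring
    have hεT : ε ≤ T := by
      by_contra hεT
      push_neg at hεT
      have := key T ⟨hT0, hεT⟩
      rw [hzero, zero_mul] at this
      exact zero_ne_one this
    have prodβ : ∀ t ∈ Ioo (0:ℝ) ε, (1 + κ * t ^ 2) * β t = 1 := by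
      intro t ht; rw [hagree t ht]; exact key t ht
    have extβ : ∀ t ∈ Ioo (0:ℝ) T, (1 + κ * t ^ 2) * β t = 1 :=
      extend_formula β κ T ε hε hεT (fun t ht => hβODE t ht.1) prodβ
    have hβcont : ContinuousAt β T := (hβODE T hT0).continuousAt
    set g : ℝ → ℝ := fun t => (1 + κ * t ^ 2) * β t with hg
    have hgcont : ContinuousAt g T := ContinuousAt.mul (by fun_prop) hβcont
    have T1 : Tendsto g (nhdsWithin T (Iio T)) (nhds (g T)) := hgcont.continuousWithinAt
    have T2 : Tendsto g (nhdsWithin T (Iio T)) (nhds 1) := by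
      apply Tendsto.congr' _ tendsto_const_nhds
      filter_upwards [Ioo_mem_nhdsLT_of_mem (⟨hT0, le_refl T⟩ : T ∈ Ioc (0:ℝ) T)] with t ht
      exact (extβ t ht).symm
    have hgT : g T = 1 := tendsto_nhds_unique T1 T2
    rw [hg] at hgT
    simp only [hzero, zero_mul] at hgT
    exact zero_ne_one hgT
  · -- 0 ≤ κ → extension exists
    intro hκ
    refine ⟨fun s => (1 + κ * s ^ 2)⁻¹, fun t ht => (formula t ht).symm, ?_⟩
    intro t ht
    have ht0 : (0:ℝ) < t := ht
    have hne : 1 + κ * t ^ 2 ≠ 0 := by positivity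
    exact asd_formula_deriv κ t ht0 hne
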